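/- Let n be an odd positive integer, x_l = l/n, and let c_1,…,c_n be real numbers with 0 ≤ c_l ≤ σ_* for all l, where σ_* > 0. Then for every integer d with 1 ≤ d ≤ n − 1: |n^{-1} Σ_{l=1}^n c_l Σ_{j=d+1}^n (φ_j(x_l)² − 1)| ≤ 2σ_*. -/

import Mathlib

open Finset

/-- Trigonometric basis on [0,1]. -/
noncomputable def phi (j : ℕ) (x : ℝ) : ℝ :=
  if j = 1 then 1
  else if j % 2 = 0 then Real.sqrt 2 * Real.cos (2 * Real.pi * (j / 2 : ℕ) * x)
  else Real.sqrt 2 * Real.sin (2 * Real.pi * (j / 2 : ℕ) * x)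

lemma phi_pair (x : ℝ) (m : ℕ) (hm : 1 ≤ m) :
    phi (2*m) x ^ 2 + phi (2*m+1) x ^ 2 = 2 := by
  have h1 : 2*m ≠ 1 := by omega
  have h2 : 2*m % 2 = 0 := by omega
  have h3 : 2*m+1 ≠ 1 := by omega
  have h4 : (2*m+1) % 2 ≠ 0 := by omega
  have e1 : (2*m)/2 = m := by omega
  have e2 : (2*m+1)/2 = m := by omega
  simp only [phi, if_neg h1, if_pos h2, if_neg h3, if_neg h4, e1, e2]
  have hs : Real.sqrt 2 ^ 2 = 2 := Real.sq_sqrt (by norm_num)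
  have := Real.sin_sq_add_cos_sq (2 * Real.pi * m * x)
  nlinarith [this, hs]

lemma sum_pair_zero (x : ℝ) : ∀ k m : ℕ, 1 ≤ m →
    ∑ j ∈ Finset.Icc (2*m) (2*m + 2*k - 1), (phi j x ^ 2 - 1) = 0 := by
  intro k
  induction k with
  | zero =>
    intro m hm
    rw [Finset.Icc_eq_empty (by omega), Finset.sum_empty]
  | succ k ih =>
    intro m hm
    have e1 : 2*m + 2*(k+1) - 1 = (2*m + 2*k) + 1 := by omega
    have e2 : 2*m + 2*k = (2*m + 2*k - 1) + 1 := by omega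
    rw [e1, Finset.sum_Icc_succ_top (by omega)]
    nth_rewrite 1 [e2]
    rw [Finset.sum_Icc_succ_top (by omega), ih m hm]
    have hp := phi_pair x (m+k) (by omega)
    have e3 : 2*m + 2*k - 1 + 1 = 2*(m+k) := by omega
    have e4 : 2*m + 2*k + 1 = 2*(m+k) + 1 := by omega
    rw [e3, e4]
    linarith

lemma tail_bound (n : ℕ) (hodd : Odd n) (d : ℕ) (hd1 : 1 ≤ d) (hdn : d + 1 ≤ n) (x : ℝ) :
    |∑ j ∈ Finset.Icc (d+1) n, (phi j x ^ 2 - 1)| ≤ 1 := by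
  obtain ⟨t, ht⟩ := hodd
  rcases Nat.even_or_odd (d+1) with ⟨m, hm⟩ | ⟨m, hm⟩
  · -- d+1 = 2m
    have hm1 : 1 ≤ m := by omega
    obtain ⟨k, hk⟩ : ∃ k, n = 2*m + 2*k - 1 := ⟨t - m + 1, by omega⟩
    have : ∑ j ∈ Finset.Icc (d+1) n, (phi j x ^ 2 - 1) = 0 := by
      rw [show d+1 = 2*m by omega, hk]; exact sum_pair_zero x k m hm1
    rw [this]; norm_num
  · -- d+1 = 2m+1, m ≥ 1
    have hm1 : 1 ≤ m := by omega
    have hins : Finset.Icc (d+1) n = insert (d+1) (Finset.Icc (d+2) n) := by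
      ext j; simp [Finset.mem_Icc, Finset.mem_insert]; omega
    rw [hins, Finset.sum_insert (by simp [Finset.mem_Icc])]
    obtain ⟨k, hk⟩ : ∃ k, n = 2*(m+1) + 2*k - 1 := ⟨t - m, by omega⟩
    have hz : ∑ j ∈ Finset.Icc (d+2) n, (phi j x ^ 2 - 1) = 0 := by
      rw [show d+2 = 2*(m+1) by omega, hk]; exact sum_pair_zero x k (m+1) (by omega)
    rw [hz, add_zero]
    have h3 : d+1 ≠ 1 := by omega
    have h4 : (d+1) % 2 ≠ 0 := by omega
    simp only [phi, if_neg h3, if_neg h4]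
    have hs : Real.sqrt 2 ^ 2 = 2 := Real.sq_sqrt (by norm_num)
    set θ := 2 * Real.pi * ((d+1)/2 : ℕ) * x
    have h5 := Real.sin_sq_add_cos_sq θ
    have h6 := sq_nonneg (Real.sin θ)
    have h7 := sq_nonneg (Real.cos θ)
    rw [abs_le]
    constructor <;> nlinarith

/-- Let `n` be an odd positive integer, `x_l = l/n`, and `c_1,…,c_n` reals with
`0 ≤ c_l ≤ σ_*` for all `l`, where `σ_* > 0`. Then for every integer `1 ≤ d ≤ n − 1`:
`|n⁻¹ Σ_{l=1}^n c_l Σ_{j=d+1}^n (φ_j(x_l)² − 1)| ≤ 2σ_*`. -/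
theorem trig_tail_weighted_bound (n : ℕ) (hodd : Odd n) (hpos : 0 < n)
    (c : ℕ → ℝ) (σstar : ℝ) (hσ : 0 < σstar)
    (hc : ∀ l ∈ Finset.Icc 1 n, 0 ≤ c l ∧ c l ≤ σstar)
    (d : ℕ) (hd1 : 1 ≤ d) (hd2 : d ≤ n - 1) :
    |(n : ℝ)⁻¹ * ∑ l ∈ Finset.Icc 1 n,
        c l * ∑ j ∈ Finset.Icc (d + 1) n, ((phi j ((l : ℝ) / n)) ^ 2 - 1)|
      ≤ 2 * σstar := by
  have hdn : d + 1 ≤ n := by omega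
  have hnp : (0:ℝ) < n := by exact_mod_cast hpos
  rw [abs_mul, abs_inv, abs_of_pos hnp]
  have hb : ∀ l ∈ Finset.Icc 1 n,
      |c l * ∑ j ∈ Finset.Icc (d + 1) n, ((phi j ((l : ℝ) / n)) ^ 2 - 1)| ≤ σstar := by
    intro l hl
    rw [abs_mul]
    have hcl := hc l hl
    have ht := tail_bound n hodd d hd1 hdn ((l : ℝ) / n)
    calc |c l| * |∑ j ∈ Finset.Icc (d + 1) n, ((phi j ((l : ℝ) / n)) ^ 2 - 1)|
        ≤ σstar * 1 := by
          apply mul_le_mul _ ht (abs_nonneg _) hσ.le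
          rw [abs_of_nonneg hcl.1]; exact hcl.2
      _ = σstar := mul_one _
  have h1 : |∑ l ∈ Finset.Icc 1 n,
      c l * ∑ j ∈ Finset.Icc (d + 1) n, ((phi j ((l : ℝ) / n)) ^ 2 - 1)|
      ≤ (n : ℝ) * σstar := by
    calc _ ≤ ∑ l ∈ Finset.Icc 1 n, |c l * ∑ j ∈ Finset.Icc (d + 1) n,
            ((phi j ((l : ℝ) / n)) ^ 2 - 1)| := Finset.abs_sum_le_sum_abs _ _
      _ ≤ ∑ l ∈ Finset.Icc 1 n, σstar := Finset.sum_le_sum hb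
      _ = (n : ℝ) * σstar := by
          rw [Finset.sum_const, Nat.card_Icc]; simp [nsmul_eq_mul]
  calc (n : ℝ)⁻¹ * |∑ l ∈ Finset.Icc 1 n,
        c l * ∑ j ∈ Finset.Icc (d + 1) n, ((phi j ((l : ℝ) / n)) ^ 2 - 1)|
      ≤ (n : ℝ)⁻¹ * ((n : ℝ) * σstar) := by
        apply mul_le_mul_of_nonneg_left h1 (by positivity)
    _ = σstar := by field_simp
    _ ≤ 2 * σstar := by linarith
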